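/- Let (y_i, m_i, w_i), 1 ≤ i ≤ n, be a weighted sample with w_i > 0, W = Σ w_i and T = Σ w_i y_i > 0. Let Ĉ↓ : [0,1] → ℝ be the piecewise-linear interpolation through the best-case corner set (α↓_i, C↓_i) with α↓_i = (1/W)Σ_{j≤i} w_{σ↓(j)} and C↓_i = (1/T)Σ_{j≤i} w_{σ↓(j)} y_{σ↓(j)}, and let Ĉ↑ be the piecewise-linear interpolation through the worst-case corner set (α↑_i, C↑_i) defined analogously from σ↑. Then Ĉ↓(x) ≥ Ĉ↑(x) for every x ∈ [0,1]; in particular the best-case CAP area dominates the worst-case CAP area, A↓ ≥ A↑. -/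

import Mathlib

/-- Partial sum `Σ_{j=1}^i f_j` of the first `i` entries of `f : Fin n → ℝ`. -/
noncomputable def psum {n : ℕ} (f : Fin n → ℝ) (i : ℕ) : ℝ :=
  ∑ j ∈ Finset.univ.filter (fun j : Fin n => (j : ℕ) < i), f j

lemma psum_zero {n : ℕ} (f : Fin n → ℝ) : psum f 0 = 0 := by
  simp [psum]

lemma psum_succ {n : ℕ} (f : Fin n → ℝ) (i : ℕ) (h : i < n) :
    psum f (i + 1) = psum f i + f ⟨i, h⟩ := by
  unfold psum
  rw [show (Finset.univ.filter (fun j : Fin n => (j : ℕ) < i + 1))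
      = insert ⟨i, h⟩ (Finset.univ.filter (fun j : Fin n => (j : ℕ) < i)) by
    ext j
    simp [Nat.lt_succ_iff_lt_or_eq, Fin.ext_iff, or_comm]
    omega]
  rw [Finset.sum_insert (by simp)]
  ring

lemma psum_mono {n : ℕ} (f : Fin n → ℝ) (hf : ∀ j, 0 ≤ f j) {i k : ℕ} (h : i ≤ k) :
    psum f i ≤ psum f k := by
  apply Finset.sum_le_sum_of_subset_of_nonneg
  · intro j hj; simp only [Finset.mem_filter] at *; exact ⟨hj.1, lt_of_lt_of_le hj.2 h⟩
  · intro j _ _; exact hf j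

lemma psum_top {n : ℕ} (f : Fin n → ℝ) {i : ℕ} (h : n ≤ i) : psum f i = ∑ j, f j := by
  unfold psum
  congr 1
  ext j
  simp [lt_of_lt_of_le j.isLt h]

lemma psum_nonneg {n : ℕ} (f : Fin n → ℝ) (hf : ∀ j, 0 ≤ f j) (i : ℕ) : 0 ≤ psum f i :=
  Finset.sum_nonneg fun j _ => hf j

/-- the "clipped mass" of a cell of width `a` starting at cumulative position `c`, at level `s` -/
noncomputable def clip (a c s : ℝ) : ℝ := min a (max 0 (s - c))

lemma clip_eq (a c s : ℝ) (ha : 0 ≤ a) : clip a c s = min s (c + a) - min s c := by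
  unfold clip
  rcases le_total s c with h | h
  · rw [max_eq_left (by linarith), min_eq_right ha, min_eq_left h,
      min_eq_left (by linarith)]
    ring
  · rw [max_eq_right (by linarith), min_eq_right h]
    rcases le_total s (c + a) with h2 | h2
    · rw [min_eq_left h2, min_eq_right (by linarith)]
    · rw [min_eq_right h2, min_eq_left (by linarith)]; ring

lemma clip_nonneg (a c s : ℝ) (ha : 0 ≤ a) : 0 ≤ clip a c s :=
  le_min ha (le_max_left _ _)

lemma clip_le (a c s : ℝ) : clip a c s ≤ a := min_le_left _ _

lemma clip_eq_zero (a c s : ℝ) (ha : 0 ≤ a) (h : s ≤ c) : clip a c s = 0 := by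
  unfold clip; rw [max_eq_left (by linarith), min_eq_right ha]

lemma clip_eq_full (a c s : ℝ) (ha : 0 ≤ a) (h : c + a ≤ s) : clip a c s = a := by
  unfold clip; rw [max_eq_right (by linarith), min_eq_left (by linarith)]

lemma clip_eq_mid (a c s : ℝ) (h1 : c ≤ s) (h2 : s ≤ c + a) : clip a c s = s - c := by
  unfold clip; rw [max_eq_right (by linarith), min_eq_right (by linarith)]

noncomputable def Dsum {n : ℕ} (a v : Fin n → ℝ) (s : ℝ) : ℝ :=
  ∑ p : Fin n, v p * clip (a p) (psum a p) s

/-- total clipped mass telescopes -/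
lemma sum_clip {n : ℕ} (a : Fin n → ℝ) (ha : ∀ p, 0 ≤ a p) (s : ℝ) :
    ∑ p : Fin n, clip (a p) (psum a p) s = min s (∑ j, a j) - min s 0 := by
  have key : ∀ p : Fin n, clip (a p) (psum a p) s
      = (fun i : ℕ => min s (psum a (i + 1)) - min s (psum a i)) p.val := by
    intro p
    simp only
    rw [clip_eq _ _ _ (ha p), psum_succ a p.val p.isLt]
  calc ∑ p : Fin n, clip (a p) (psum a p) s
      = ∑ p : Fin n, (fun i : ℕ => min s (psum a (i + 1)) - min s (psum a i)) p.val := by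
        exact Finset.sum_congr rfl fun p _ => key p
    _ = ∑ i ∈ Finset.range n, (min s (psum a (i + 1)) - min s (psum a i)) := by
        exact Fin.sum_univ_eq_sum_range (fun i => min s (psum a (i + 1)) - min s (psum a i)) n
    _ = min s (psum a n) - min s (psum a 0) := Finset.sum_range_sub (fun i => min s (psum a i)) n
    _ = min s (∑ j, a j) - min s 0 := by rw [psum_top a (le_refl n), psum_zero]

/-- value of `Dsum` on the segment `[psum a i, psum a (i+1)]` -/
lemma Dsum_interp {n : ℕ} (a v : Fin n → ℝ) (ha : ∀ p, 0 ≤ a p) {s : ℝ} {i : ℕ}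
    (hi : i < n) (h1 : psum a i ≤ s) (h2 : s ≤ psum a (i + 1)) :
    Dsum a v s = psum (fun p => v p * a p) i + (s - psum a i) * v ⟨i, hi⟩ := by
  have hsucc := psum_succ a i hi
  unfold Dsum
  have key : ∀ p : Fin n, v p * clip (a p) (psum a p) s
      = (if (p : ℕ) < i then v p * a p else 0)
        + (if p = (⟨i, hi⟩ : Fin n) then (s - psum a i) * v ⟨i, hi⟩ else 0) := by
    intro p
    rcases lt_trichotomy (p : ℕ) i with h | h | h
    · rw [if_pos h, if_neg (by simp [Fin.ext_iff]; omega)]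
      rw [clip_eq_full _ _ _ (ha p)]
      · ring
      · calc psum a p + a p = psum a ((p : ℕ) + 1) := (psum_succ a p p.isLt).symm
          _ ≤ psum a i := psum_mono a ha h
          _ ≤ s := h1
    · have hp : p = (⟨i, hi⟩ : Fin n) := by simp [Fin.ext_iff, h]
      rw [if_neg (by omega), if_pos hp, hp]
      rw [clip_eq_mid _ _ _ h1 (by rw [hsucc] at h2; exact h2)]
      ring
    · rw [if_neg (by omega), if_neg (by simp [Fin.ext_iff]; omega)]
      rw [clip_eq_zero _ _ _ (ha p)]
      · ring
      · calc s ≤ psum a (i + 1) := h2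
          _ ≤ psum a p := psum_mono a ha h
  rw [Finset.sum_congr rfl fun p _ => key p, Finset.sum_add_distrib]
  congr 1
  · rw [← Finset.sum_filter]; rfl
  · rw [Finset.sum_ite_eq' Finset.univ (⟨i, hi⟩ : Fin n) (fun _ => (s - psum a i) * v ⟨i, hi⟩)]
    simp

lemma psum_comp_le {n : ℕ} (w : Fin n → ℝ) (hw : ∀ i, 0 ≤ w i) (σ : Equiv.Perm (Fin n))
    (t : ℕ) (A : Finset (Fin n)) (h : ∀ q : Fin n, (q : ℕ) < t → σ q ∈ A) :
    psum (fun q => w (σ q)) t ≤ ∑ j ∈ A, w j := by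
  calc psum (fun q => w (σ q)) t
      = ∑ j ∈ (Finset.univ.filter fun j : Fin n => (j : ℕ) < t).image σ, w j :=
        (Finset.sum_image (fun x _ y _ hxy => σ.injective hxy)).symm
    _ ≤ ∑ j ∈ A, w j := by
        apply Finset.sum_le_sum_of_subset_of_nonneg
        · intro j hj
          simp only [Finset.mem_image, Finset.mem_filter] at hj
          obtain ⟨q, ⟨-, hq⟩, rfl⟩ := hj
          exact h q hq
        · intro j _ _; exact hw j

lemma le_psum_comp {n : ℕ} (w : Fin n → ℝ) (hw : ∀ i, 0 ≤ w i) (σ : Equiv.Perm (Fin n))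
    (t : ℕ) (A : Finset (Fin n)) (h : ∀ j ∈ A, ((σ.symm j : Fin n) : ℕ) < t) :
    ∑ j ∈ A, w j ≤ psum (fun q => w (σ q)) t := by
  calc ∑ j ∈ A, w j
      ≤ ∑ j ∈ (Finset.univ.filter fun j : Fin n => (j : ℕ) < t).image σ, w j := by
        apply Finset.sum_le_sum_of_subset_of_nonneg
        · intro j hj
          simp only [Finset.mem_image, Finset.mem_filter]
          exact ⟨σ.symm j, ⟨Finset.mem_univ _, h j hj⟩, σ.apply_symm_apply j⟩
        · intro j _ _; exact hw j
    _ = psum (fun q => w (σ q)) t :=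
        Finset.sum_image (fun x _ y _ hxy => σ.injective hxy)

/-- Core inequality: the (m-desc, y-desc) greedy curve dominates any m-antitone curve. -/
lemma core {n : ℕ} (y m w : Fin n → ℝ) (hw : ∀ i, 0 < w i)
    (σd σu : Equiv.Perm (Fin n))
    (hd1 : Antitone (fun i : Fin n => m (σd i)))
    (hd2 : ∀ j k : Fin n, j < k → m (σd j) = m (σd k) → y (σd k) ≤ y (σd j))
    (hu1 : Antitone (fun i : Fin n => m (σu i)))
    {s : ℝ} {k : ℕ} (hk : k < n)
    (hs1 : psum (fun q => w (σd q)) k ≤ s)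
    (hs2 : s ≤ psum (fun q => w (σd q)) (k + 1)) :
    Dsum (fun q => w (σu q)) (fun q => y (σu q)) s
      ≤ Dsum (fun q => w (σd q)) (fun q => y (σd q)) s := by
  have hw' : ∀ i, 0 ≤ w i := fun i => (hw i).le
  set K : Fin n := ⟨k, hk⟩ with hK
  set μ := m (σd K) with hμ
  set lam := y (σd K) with hlam
  set Z : Equiv.Perm (Fin n) → Fin n → ℝ :=
    fun σ i => clip (w i) (psum (fun q => w (σ q)) ((σ.symm i : Fin n) : ℕ)) s with hZ
  have reindex : ∀ σ : Equiv.Perm (Fin n),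
      Dsum (fun q => w (σ q)) (fun q => y (σ q)) s = ∑ i, y i * Z σ i := by
    intro σ
    rw [← Equiv.sum_comp σ (fun i => y i * Z σ i)]
    unfold Dsum
    apply Finset.sum_congr rfl
    intro p _
    simp [hZ]
  have hcompnn : ∀ (σ : Equiv.Perm (Fin n)) (q : Fin n), 0 ≤ w (σ q) := fun σ q => hw' _
  have sumZ : ∑ i, Z σd i = ∑ i, Z σu i := by
    have h1 : ∀ σ : Equiv.Perm (Fin n), ∑ i, Z σ i = min s (∑ j, w j) - min s 0 := by
      intro σ
      rw [← Equiv.sum_comp σ (fun i => Z σ i)]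
      have : ∀ p : Fin n, Z σ (σ p)
          = clip ((fun q => w (σ q)) p) (psum (fun q => w (σ q)) p) s := by
        intro p; simp [hZ]
      rw [Finset.sum_congr rfl fun p _ => this p,
        sum_clip (fun q => w (σ q)) (hcompnn σ) s, Equiv.sum_comp σ w]
    rw [h1, h1]
  -- positional facts
  have posval : ∀ (σ : Equiv.Perm (Fin n)) (i : Fin n),
      psum (fun q => w (σ q)) (((σ.symm i : Fin n) : ℕ) + 1)
        = psum (fun q => w (σ q)) ((σ.symm i : Fin n) : ℕ) + w i := by
    intro σ i
    rw [psum_succ (fun q => w (σ q)) _ (σ.symm i).isLt]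
    simp
  have key : ∀ i : Fin n, 0 ≤ (y i - lam) * (Z σd i - Z σu i) := by
    intro i
    have hZle : ∀ σ, Z σ i ≤ w i := fun σ => clip_le _ _ _
    have hZnn : ∀ σ, 0 ≤ Z σ i := fun σ => clip_nonneg _ _ _ (hw' i)
    -- full cell when mass below reaches the cell
    have hfull : ∀ σ : Equiv.Perm (Fin n),
        psum (fun q => w (σ q)) (((σ.symm i : Fin n) : ℕ) + 1) ≤ s → Z σ i = w i := by
      intro σ h
      apply clip_eq_full _ _ _ (hw' i)
      rw [posval σ i] at h; linarith
    have hzero : ∀ σ : Equiv.Perm (Fin n),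
        s ≤ psum (fun q => w (σ q)) ((σ.symm i : Fin n) : ℕ) → Z σ i = 0 := by
      intro σ h
      exact clip_eq_zero _ _ _ (hw' i) h
    rcases lt_trichotomy (m i) μ with hmi | hmi | hmi
    · -- m i < μ : both zero
      have hz : ∀ σ : Equiv.Perm (Fin n), Antitone (fun p : Fin n => m (σ p)) → Z σ i = 0 := by
        intro σ hσ
        apply hzero
        calc s ≤ psum (fun q => w (σd q)) (k + 1) := hs2
          _ ≤ ∑ j ∈ Finset.univ.filter (fun j => μ ≤ m j), w j := by
              apply psum_comp_le w hw' σd _ _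
              intro q hq
              simp only [Finset.mem_filter, Finset.mem_univ, true_and]
              exact hd1 (show q ≤ K by rw [Fin.le_def]; exact Nat.lt_succ_iff.mp hq)
          _ ≤ psum (fun q => w (σ q)) ((σ.symm i : Fin n) : ℕ) := by
              apply le_psum_comp w hw' σ _ _
              intro j hj
              simp only [Finset.mem_filter, Finset.mem_univ, true_and] at hj
              by_contra hc
              push_neg at hc
              have : m (σ (σ.symm j)) ≤ m (σ (σ.symm i)) :=
                hσ (show σ.symm i ≤ σ.symm j by rw [Fin.le_def]; omega)
              simp at this
              linarith
      rw [hz σd hd1, hz σu hu1]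
      simp
    · -- m i = μ
      rcases lt_trichotomy (y i) lam with hyi | hyi | hyi
      · -- y i < lam : Z σd i = 0
        have hposgt : k < ((σd.symm i : Fin n) : ℕ) := by
          rcases lt_trichotomy ((σd.symm i : Fin n) : ℕ) k with h | h | h
          · exfalso
            have := hd2 (σd.symm i) K (by rw [Fin.lt_def]; exact h)
              (by simp [← hμ, hmi])
            simp [← hlam] at this
            linarith
          · exfalso
            have : σd.symm i = K := Fin.ext h
            have : i = σd K := by rw [← this]; simp
            rw [this] at hyi
            exact absurd hyi (lt_irrefl _)
          · exact h
        have hZd : Z σd i = 0 := by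
          apply hzero
          calc s ≤ psum (fun q => w (σd q)) (k + 1) := hs2
            _ ≤ _ := psum_mono _ (hcompnn σd) (by omega)
        rw [hZd]
        have h1 := hZnn σu
        nlinarith
      · rw [hyi]; simp
      · -- y i > lam : Z σd i = w i
        have hposlt : ((σd.symm i : Fin n) : ℕ) < k := by
          rcases lt_trichotomy ((σd.symm i : Fin n) : ℕ) k with h | h | h
          · exact h
          · exfalso
            have : σd.symm i = K := Fin.ext h
            have : i = σd K := by rw [← this]; simp
            rw [this] at hyi
            exact absurd hyi (lt_irrefl _)
          · exfalso
            have := hd2 K (σd.symm i) (by rw [Fin.lt_def]; exact h)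
              (by simp [← hμ, hmi])
            simp [← hlam] at this
            linarith
        have hZd : Z σd i = w i := by
          apply hfull
          calc psum (fun q => w (σd q)) (((σd.symm i : Fin n) : ℕ) + 1)
              ≤ psum (fun q => w (σd q)) k := psum_mono _ (hcompnn σd) (by omega)
            _ ≤ s := hs1
        rw [hZd]
        apply mul_nonneg
        · linarith
        · have := hZle σu; linarith
    · -- m i > μ : both full
      have hf : ∀ σ : Equiv.Perm (Fin n), Antitone (fun p : Fin n => m (σ p)) → Z σ i = w i := by
        intro σ hσ
        apply hfull
        calc psum (fun q => w (σ q)) (((σ.symm i : Fin n) : ℕ) + 1)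
            ≤ ∑ j ∈ Finset.univ.filter (fun j => μ < m j), w j := by
              apply psum_comp_le w hw' σ _ _
              intro q hq
              simp only [Finset.mem_filter, Finset.mem_univ, true_and]
              have : m (σ (σ.symm i)) ≤ m (σ q) :=
                hσ (show q ≤ σ.symm i by rw [Fin.le_def]; omega)
              simp at this
              linarith
          _ ≤ psum (fun q => w (σd q)) k := by
              apply le_psum_comp w hw' σd _ _
              intro j hj
              simp only [Finset.mem_filter, Finset.mem_univ, true_and] at hj
              by_contra hc
              push_neg at hc
              have : m (σd (σd.symm j)) ≤ m (σd K) :=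
                hd1 (show K ≤ σd.symm j by rw [Fin.le_def]; exact hc)
              simp at this
              linarith
          _ ≤ s := hs1
      rw [hf σd hd1, hf σu hu1]
      simp
  -- assemble
  have expand : ∑ i, (y i - lam) * (Z σd i - Z σu i)
      = (∑ i, y i * Z σd i) - (∑ i, y i * Z σu i)
        - lam * ((∑ i, Z σd i) - (∑ i, Z σu i)) := by
    simp only [mul_sub, Finset.mul_sum]
    rw [← Finset.sum_sub_distrib, ← Finset.sum_sub_distrib, ← Finset.sum_sub_distrib]
    exact Finset.sum_congr rfl fun i _ => by ring
  have hnn : 0 ≤ ∑ i, (y i - lam) * (Z σd i - Z σu i) :=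
    Finset.sum_nonneg fun i _ => key i
  rw [reindex σd, reindex σu]
  rw [expand, sumZ] at hnn
  linarith

lemma exists_segment {n : ℕ} (a : Fin n → ℝ) (ha : ∀ p, 0 ≤ a p) (hn : 0 < n)
    {s : ℝ} (h0 : 0 ≤ s) (h1 : s ≤ ∑ j, a j) :
    ∃ k, k < n ∧ psum a k ≤ s ∧ s ≤ psum a (k + 1) := by
  by_contra hcon
  push_neg at hcon
  have H : ∀ k, k ≤ n → psum a k ≤ s := by
    intro k
    induction k with
    | zero => intro _; rw [psum_zero]; exact h0
    | succ k ih =>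
      intro hk
      have hk' : k < n := by omega
      exact (hcon k hk' (ih (by omega))).le
  have hlast := hcon (n - 1) (by omega) (H (n - 1) (by omega))
  rw [show n - 1 + 1 = n by omega] at hlast
  rw [psum_top a (le_refl n)] at hlast
  linarith

lemma interp_expr {n : ℕ} (a v : Fin n → ℝ) (ha : ∀ p, 0 < a p)
    (W T : ℝ) (hW : W = ∑ j, a j) (hWpos : 0 < W) (hT : 0 < T) {x : ℝ} {i : ℕ}
    (hi : i < n) (h1 : psum a i ≤ x * W) (h2 : x * W ≤ psum a (i + 1)) :
    (1 / T) * psum (fun j => a j * v j) i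
      + (x - (1 / W) * psum a i) / ((1 / W) * psum a (i + 1) - (1 / W) * psum a i)
        * ((1 / T) * psum (fun j => a j * v j) (i + 1) - (1 / T) * psum (fun j => a j * v j) i)
      = (1 / T) * Dsum a v (x * W) := by
  have hsa := psum_succ a i hi
  have hsv := psum_succ (fun j => a j * v j) i hi
  have hD := Dsum_interp a v (fun p => (ha p).le) hi h1 h2
  have hcomm : psum (fun p => v p * a p) i = psum (fun j => a j * v j) i := by
    unfold psum; exact Finset.sum_congr rfl fun p _ => mul_comm _ _
  rw [hD, hcomm, hsa, hsv]
  have hane : a ⟨i, hi⟩ ≠ 0 := (ha _).ne'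
  have hWne : W ≠ 0 := hWpos.ne'
  have hTne : T ≠ 0 := hT.ne'
  field_simp
  linear_combination (x * W * v ⟨i, hi⟩ - psum a i * v ⟨i, hi⟩) * mul_inv_cancel₀ hane

lemma trap_eq {n : ℕ} (a v : Fin n → ℝ) :
    ∑ i ∈ Finset.range n,
      (psum (fun j => a j * v j) (i + 1) + psum (fun j => a j * v j) i)
        * (psum a (i + 1) - psum a i) / 2
    = ∑ p : Fin n, v p * (a p * ((∑ j, a j) - psum a p - a p / 2)) := by
  set g : Fin n → ℝ := fun j => a j * v j with hg
  have inner : ∀ q : Fin n, ∑ p : Fin n, (if (q : ℕ) < (p : ℕ) then a p else 0)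
      = (∑ j, a j) - psum a ((q : ℕ) + 1) := by
    intro q
    have hsplit : (∑ p : Fin n, (if (q : ℕ) < (p : ℕ) then a p else 0))
        + (∑ p : Fin n, (if ¬((q : ℕ) < (p : ℕ)) then a p else 0)) = ∑ j, a j := by
      rw [← Finset.sum_add_distrib]
      apply Finset.sum_congr rfl
      intro p _
      by_cases h : (q : ℕ) < (p : ℕ) <;> simp [h]
    have h2 : (∑ p : Fin n, (if ¬((q : ℕ) < (p : ℕ)) then a p else 0))
        = psum a ((q : ℕ) + 1) := by
      unfold psum
      rw [Finset.sum_filter]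
      apply Finset.sum_congr rfl
      intro p _
      by_cases h : (p : ℕ) < (q : ℕ) + 1
      · rw [if_pos (by omega), if_pos h]
      · rw [if_neg (by omega), if_neg h]
    linarith
  have hps : ∀ p : Fin n, psum g (p : ℕ) = ∑ q : Fin n, if (q : ℕ) < (p : ℕ) then g q else 0 := by
    intro p; unfold psum; rw [Finset.sum_filter]
  have swap : ∑ p : Fin n, psum g (p : ℕ) * a p
      = ∑ q : Fin n, g q * ((∑ j, a j) - psum a ((q : ℕ) + 1)) := by
    calc ∑ p : Fin n, psum g (p : ℕ) * a p
        = ∑ p : Fin n, ∑ q : Fin n, (if (q : ℕ) < (p : ℕ) then g q * a p else 0) := by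
          apply Finset.sum_congr rfl
          intro p _
          rw [hps p, Finset.sum_mul]
          exact Finset.sum_congr rfl fun q _ => by rw [ite_mul, zero_mul]
      _ = ∑ q : Fin n, ∑ p : Fin n, (if (q : ℕ) < (p : ℕ) then g q * a p else 0) :=
          Finset.sum_comm
      _ = ∑ q : Fin n, g q * ((∑ j, a j) - psum a ((q : ℕ) + 1)) := by
          apply Finset.sum_congr rfl
          intro q _
          rw [show (∑ p : Fin n, if (q : ℕ) < (p : ℕ) then g q * a p else 0)
              = g q * ∑ p : Fin n, (if (q : ℕ) < (p : ℕ) then a p else 0) by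
            rw [Finset.mul_sum]
            exact Finset.sum_congr rfl fun p _ => by rw [mul_ite, mul_zero]]
          rw [inner q]
  calc ∑ i ∈ Finset.range n, (psum g (i + 1) + psum g i) * (psum a (i + 1) - psum a i) / 2
      = ∑ p : Fin n, (psum g ((p : ℕ) + 1) + psum g (p : ℕ))
          * (psum a ((p : ℕ) + 1) - psum a (p : ℕ)) / 2 :=
        (Fin.sum_univ_eq_sum_range
          (fun i => (psum g (i + 1) + psum g i) * (psum a (i + 1) - psum a i) / 2) n).symm
    _ = ∑ p : Fin n, (psum g (p : ℕ) * a p + v p * (a p * a p) / 2) := by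
        apply Finset.sum_congr rfl
        intro p _
        rw [psum_succ g (p : ℕ) p.isLt, psum_succ a (p : ℕ) p.isLt]
        simp only [Fin.eta, hg]
        ring
    _ = (∑ p : Fin n, psum g (p : ℕ) * a p) + ∑ p : Fin n, v p * (a p * a p) / 2 :=
        Finset.sum_add_distrib
    _ = ∑ p : Fin n, v p * (a p * ((∑ j, a j) - psum a p - a p / 2)) := by
        rw [swap, ← Finset.sum_add_distrib]
        apply Finset.sum_congr rfl
        intro q _
        rw [psum_succ a (q : ℕ) q.isLt]
        simp only [Fin.eta, hg]
        ring

lemma clip_continuous (a c : ℝ) : Continuous fun s : ℝ => clip a c s := by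
  unfold clip
  exact continuous_const.min (continuous_const.max (continuous_id.sub continuous_const))

lemma clip_integral (a c Wt : ℝ) (ha : 0 ≤ a) (hc : 0 ≤ c) (hca : c + a ≤ Wt) :
    ∫ s in (0:ℝ)..Wt, clip a c s = a * (Wt - c - a / 2) := by
  have hint : ∀ u t : ℝ, IntervalIntegrable (fun s => clip a c s) MeasureTheory.volume u t :=
    fun u t => (clip_continuous a c).intervalIntegrable u t
  have i1 : ∫ s in (0:ℝ)..c, clip a c s = 0 := by
    rw [intervalIntegral.integral_congr (g := fun _ => (0:ℝ))]
    · simp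
    · intro s hs
      rw [Set.uIcc_of_le hc] at hs
      exact clip_eq_zero a c s ha hs.2
  have i2 : ∫ s in c..(c + a), clip a c s = a * a / 2 := by
    rw [intervalIntegral.integral_congr (g := fun s => s - c)]
    · rw [intervalIntegral.integral_sub intervalIntegral.intervalIntegrable_id
        intervalIntegrable_const, integral_id, intervalIntegral.integral_const]
      simp only [smul_eq_mul]
      ring
    · intro s hs
      rw [Set.uIcc_of_le (by linarith)] at hs
      exact clip_eq_mid a c s hs.1 hs.2
  have i3 : ∫ s in (c + a)..Wt, clip a c s = a * (Wt - (c + a)) := by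
    rw [intervalIntegral.integral_congr (g := fun _ => a)]
    · rw [intervalIntegral.integral_const]
      simp only [smul_eq_mul]
      ring
    · intro s hs
      rw [Set.uIcc_of_le (by linarith)] at hs
      exact clip_eq_full a c s ha hs.1
  have comb1 := intervalIntegral.integral_add_adjacent_intervals (hint 0 c) (hint c (c + a))
  have comb2 := intervalIntegral.integral_add_adjacent_intervals (hint 0 (c + a)) (hint (c + a) Wt)
  rw [← comb2, ← comb1, i1, i2, i3]
  ring

lemma Dsum_continuous {n : ℕ} (a v : Fin n → ℝ) : Continuous fun s => Dsum a v s := by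
  unfold Dsum
  exact continuous_finset_sum _ fun p _ => continuous_const.mul (clip_continuous _ _)

lemma Dsum_integral {n : ℕ} (a v : Fin n → ℝ) (ha : ∀ p, 0 < a p) :
    ∫ s in (0:ℝ)..(∑ j, a j), Dsum a v s
      = ∑ p : Fin n, v p * (a p * ((∑ j, a j) - psum a p - a p / 2)) := by
  unfold Dsum
  rw [intervalIntegral.integral_finset_sum (f := fun p s => v p * clip (a p) (psum a p) s) (fun p _ =>
    ((continuous_const.mul (clip_continuous (a p) (psum a p))).intervalIntegrable _ _ :
      IntervalIntegrable (fun s => v p * clip (a p) (psum a p) s) _ _ _))]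
  apply Finset.sum_congr rfl
  intro p _
  rw [intervalIntegral.integral_const_mul, clip_integral (a p) (psum a p) _
    (ha p).le (psum_nonneg a (fun q => (ha q).le) _)
    (by
      rw [← psum_succ a (p : ℕ) p.isLt, ← psum_top a (le_refl n)]
      exact psum_mono a (fun q => (ha q).le) p.isLt)]

/-- the piecewise-linear best-case CAP `Ĉ↓` dominates the worst-case CAP `Ĉ↑`
pointwise on `[0,1]` (expressed via the linear interpolation formula on any segment of the
respective corner sets containing `x`); in particular `A↓ ≥ A↑`. -/
theorem stmt19 (n : ℕ) (y m w : Fin n → ℝ) (hw : ∀ i, 0 < w i)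
    (W T : ℝ) (hW : W = ∑ i, w i) (hT : T = ∑ i, w i * y i) (hTpos : 0 < T)
    (σd σu : Equiv.Perm (Fin n))
    (hd1 : Antitone (fun i : Fin n => m (σd i)))
    (hd2 : ∀ j k : Fin n, j < k → m (σd j) = m (σd k) → y (σd k) ≤ y (σd j))
    (hu1 : Antitone (fun i : Fin n => m (σu i)))
    (hu2 : ∀ j k : Fin n, j < k → m (σu j) = m (σu k) → y (σu j) ≤ y (σu k))
    (αd Cd αu Cu : ℕ → ℝ)
    (hαd : ∀ i : ℕ, αd i = (1 / W) * psum (fun j => w (σd j)) i)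
    (hCd : ∀ i : ℕ, Cd i = (1 / T) * psum (fun j => w (σd j) * y (σd j)) i)
    (hαu : ∀ i : ℕ, αu i = (1 / W) * psum (fun j => w (σu j)) i)
    (hCu : ∀ i : ℕ, Cu i = (1 / T) * psum (fun j => w (σu j) * y (σu j)) i)
    (Ad Au : ℝ)
    (hAd : Ad = (∑ i ∈ Finset.range n,
      (Cd (i + 1) + Cd i) * (αd (i + 1) - αd i) / 2) - 1 / 2)
    (hAu : Au = (∑ i ∈ Finset.range n,
      (Cu (i + 1) + Cu i) * (αu (i + 1) - αu i) / 2) - 1 / 2) :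
    (∀ x ∈ Set.Icc (0 : ℝ) 1, ∀ i j : ℕ, i < n → j < n →
      αd i ≤ x → x ≤ αd (i + 1) → αu j ≤ x → x ≤ αu (j + 1) →
        Cu j + (x - αu j) / (αu (j + 1) - αu j) * (Cu (j + 1) - Cu j)
          ≤ Cd i + (x - αd i) / (αd (i + 1) - αd i) * (Cd (i + 1) - Cd i)) ∧
    Au ≤ Ad := by
  have hsumd : ∑ j, w (σd j) = ∑ j, w j := Equiv.sum_comp σd w
  have hsumu : ∑ j, w (σu j) = ∑ j, w j := Equiv.sum_comp σu w
  constructor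
  · intro x hx i j hi hj h1 h2 h3 h4
    have hn : 0 < n := by omega
    have hWpos : 0 < W := by
      rw [hW]
      exact Finset.sum_pos (fun q _ => hw q) ⟨⟨0, hn⟩, Finset.mem_univ _⟩
    have hWne : W ≠ 0 := hWpos.ne'
    have hb1 : psum (fun q => w (σd q)) i ≤ x * W := by
      rw [hαd i] at h1
      have := mul_le_mul_of_nonneg_right h1 hWpos.le
      calc psum (fun q => w (σd q)) i = 1 / W * psum (fun q => w (σd q)) i * W := by
            field_simp
        _ ≤ x * W := this
    have hb2 : x * W ≤ psum (fun q => w (σd q)) (i + 1) := by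
      rw [hαd (i + 1)] at h2
      have := mul_le_mul_of_nonneg_right h2 hWpos.le
      calc x * W ≤ 1 / W * psum (fun q => w (σd q)) (i + 1) * W := this
        _ = psum (fun q => w (σd q)) (i + 1) := by field_simp
    have hb3 : psum (fun q => w (σu q)) j ≤ x * W := by
      rw [hαu j] at h3
      have := mul_le_mul_of_nonneg_right h3 hWpos.le
      calc psum (fun q => w (σu q)) j = 1 / W * psum (fun q => w (σu q)) j * W := by
            field_simp
        _ ≤ x * W := this
    have hb4 : x * W ≤ psum (fun q => w (σu q)) (j + 1) := by
      rw [hαu (j + 1)] at h4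
      have := mul_le_mul_of_nonneg_right h4 hWpos.le
      calc x * W ≤ 1 / W * psum (fun q => w (σu q)) (j + 1) * W := this
        _ = psum (fun q => w (σu q)) (j + 1) := by field_simp
    have hEd := interp_expr (fun q => w (σd q)) (fun q => y (σd q)) (fun p => hw _)
      W T (hW.trans hsumd.symm) hWpos hTpos hi hb1 hb2
    have hEu := interp_expr (fun q => w (σu q)) (fun q => y (σu q)) (fun p => hw _)
      W T (hW.trans hsumu.symm) hWpos hTpos hj hb3 hb4
    have hcore := core y m w hw σd σu hd1 hd2 hu1 hi hb1 hb2
    rw [hCd i, hCd (i + 1), hαd i, hαd (i + 1), hCu j, hCu (j + 1), hαu j, hαu (j + 1)]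
    rw [hEd, hEu]
    exact mul_le_mul_of_nonneg_left hcore (by positivity)
  · rcases Nat.eq_zero_or_pos n with hn | hn
    · subst hn
      simp [hAd, hAu]
    · have hWpos : 0 < W := by
        rw [hW]
        exact Finset.sum_pos (fun q _ => hw q) ⟨⟨0, hn⟩, Finset.mem_univ _⟩
      have area_d : Ad = 1 / (W * T)
          * (∫ s in (0:ℝ)..(∑ j, w j), Dsum (fun q => w (σd q)) (fun q => y (σd q)) s)
            - 1 / 2 := by
        rw [hAd]
        congr 1
        have h1 : ∀ i ∈ Finset.range n, (Cd (i + 1) + Cd i) * (αd (i + 1) - αd i) / 2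
            = 1 / (W * T) * ((psum (fun q => w (σd q) * y (σd q)) (i + 1)
                + psum (fun q => w (σd q) * y (σd q)) i)
              * (psum (fun q => w (σd q)) (i + 1) - psum (fun q => w (σd q)) i) / 2) := by
          intro i _
          rw [hCd, hCd, hαd, hαd]
          ring
        rw [Finset.sum_congr rfl h1, ← Finset.mul_sum,
          trap_eq (fun q => w (σd q)) (fun q => y (σd q)),
          ← Dsum_integral (fun q => w (σd q)) (fun q => y (σd q)) (fun p => hw _), hsumd]
      have area_u : Au = 1 / (W * T)
          * (∫ s in (0:ℝ)..(∑ j, w j), Dsum (fun q => w (σu q)) (fun q => y (σu q)) s)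
            - 1 / 2 := by
        rw [hAu]
        congr 1
        have h1 : ∀ i ∈ Finset.range n, (Cu (i + 1) + Cu i) * (αu (i + 1) - αu i) / 2
            = 1 / (W * T) * ((psum (fun q => w (σu q) * y (σu q)) (i + 1)
                + psum (fun q => w (σu q) * y (σu q)) i)
              * (psum (fun q => w (σu q)) (i + 1) - psum (fun q => w (σu q)) i) / 2) := by
          intro i _
          rw [hCu, hCu, hαu, hαu]
          ring
        rw [Finset.sum_congr rfl h1, ← Finset.mul_sum,
          trap_eq (fun q => w (σu q)) (fun q => y (σu q)),
          ← Dsum_integral (fun q => w (σu q)) (fun q => y (σu q)) (fun p => hw _), hsumu]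
      have hmono : (∫ s in (0:ℝ)..(∑ j, w j), Dsum (fun q => w (σu q)) (fun q => y (σu q)) s)
          ≤ ∫ s in (0:ℝ)..(∑ j, w j), Dsum (fun q => w (σd q)) (fun q => y (σd q)) s := by
        apply intervalIntegral.integral_mono_on
          (Finset.sum_nonneg fun q _ => (hw q).le)
          ((Dsum_continuous _ _).intervalIntegrable _ _)
          ((Dsum_continuous _ _).intervalIntegrable _ _)
        intro s hs
        obtain ⟨k, hk, hk1, hk2⟩ := exists_segment (fun q => w (σd q))
          (fun p => (hw _).le) hn hs.1 (by rw [hsumd]; exact hs.2)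
        exact core y m w hw σd σu hd1 hd2 hu1 hk hk1 hk2
      rw [area_d, area_u]
      have hc : (0:ℝ) ≤ 1 / (W * T) := by positivity
      have := mul_le_mul_of_nonneg_left hmono hc
      linarith
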